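/- For integers 1 ≤ m ≤ n and an indeterminate λ, the double sum over i from m to n and j from m to i of (-1)^(i+j) * [n,i] * C(i,j) * {j,m} * λ^(i-j) equals (-1)^(m+n) * (n!/m!) * C(λ-m, n-m), where C(λ-m, n-m) is the generalized binomial coefficient polynomial. -/

import Mathlib

/-!
The identity is read through forward differences `Δ` of step `1`. Since `m! {j,m} = Δᵐ xʲ` at
`x = 0`, the binomial theorem turns the inner sum over `j`, in which
`(-1)^(i+j) λ^(i-j) = (-λ)^(i-j)`, into `Δᵐ (x - λ)ⁱ / m!` at `0`. Summing against `[n,i]` produces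
the rising factorial `(x - λ)(x - λ + 1)⋯(x - λ + n - 1)`, and `Δ` sends the rising factorial of
length `r` to `r` times the one of length `r - 1` shifted by one. Hence the sum is
`n!/(m! (n-m)!)` times `(m - λ)(m - λ + 1)⋯(n - 1 - λ) = (-1)^(n-m) (n-m)! C(λ-m, n-m)`.
-/

open Finset

/-- Unsigned Stirling numbers of the first kind. -/
def stirling1 : ℕ → ℕ → ℕ
  | 0, 0 => 1
  | 0, _ + 1 => 0
  | _ + 1, 0 => 0
  | n + 1, k + 1 => n * stirling1 n (k + 1) + stirling1 n k

/-- Stirling numbers of the second kind. -/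
def stirling2 : ℕ → ℕ → ℕ
  | 0, 0 => 1
  | 0, _ + 1 => 0
  | _ + 1, 0 => 0
  | n + 1, k + 1 => (k + 1) * stirling2 n (k + 1) + stirling2 n k

/-- Generalized binomial coefficient `C(x, r) = x(x-1)⋯(x-r+1)/r!` in a ℚ-algebra. -/
noncomputable def gchoose {R : Type*} [CommRing R] [Algebra ℚ R] (x : R) (r : ℕ) : R :=
  algebraMap ℚ R ((r.factorial : ℚ)⁻¹) * ∏ i ∈ Finset.range r, (x - i)

open scoped fwdDiff

theorem stirling1_eq_stirlingFirst : stirling1 = Nat.stirlingFirst := by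
  funext n k
  induction n generalizing k with
  | zero => cases k <;> rfl
  | succ n ih => cases k <;> simp [stirling1, Nat.stirlingFirst_succ_succ, ih]

theorem stirling2_eq_stirlingSecond : stirling2 = Nat.stirlingSecond := by
  funext n k
  induction n generalizing k with
  | zero => cases k <;> rfl
  | succ n ih => cases k <;> simp [stirling2, Nat.stirlingSecond_succ_succ, ih]

theorem ascPochhammer_eval_eq_sum_stirlingFirst {R : Type*} [CommSemiring R] (n : ℕ) (x : R) :
    (ascPochhammer R n).eval x = ∑ i ∈ range (n + 1), (n.stirlingFirst i : R) * x ^ i := by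
  induction n with
  | zero => simp
  | succ n ih =>
    have hshift : ∑ i ∈ range (n + 1), (n * n.stirlingFirst i : R) * x ^ i
        = ∑ i ∈ range (n + 1), (n * n.stirlingFirst (i + 1) : R) * x ^ (i + 1) := by
      have h0 : (n * n.stirlingFirst 0 : R) = 0 := by cases n <;> simp
      have := (sum_range_succ (fun i ↦ (n * n.stirlingFirst i : R) * x ^ i) (n + 1)).symm.trans
        (sum_range_succ' _ (n + 1))
      simpa [h0, Nat.stirlingFirst_eq_zero_of_lt] using this
    rw [sum_range_succ', ascPochhammer_succ_eval, ih, sum_mul]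
    simp only [Nat.stirlingFirst_succ_succ, Nat.stirlingFirst_succ_zero, Nat.cast_add,
      Nat.cast_mul, Nat.cast_zero, zero_mul, add_zero, mul_add, add_mul, sum_add_distrib,
      ← hshift]
    rw [add_comm]
    congr 1 <;> exact sum_congr rfl fun i _ ↦ by ring

-- `Δ_[h]^[m]` does not parse once all of Mathlib is imported (`]^` is a token there).
theorem fwdDiff_iter_sum_mul_apply {M R ι : Type*} [AddCommMonoid M] [Ring R] (h : M)
    (s : Finset ι) (c : ι → R) (f : ι → M → R) (m : ℕ) (y : M) :
    Δ_[h] ^[m] (fun x ↦ ∑ i ∈ s, c i * f i x) y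
      = ∑ i ∈ s, c i * Δ_[h] ^[m] (f i) y := by
  have : (fun x ↦ ∑ i ∈ s, c i * f i x) = ∑ i ∈ s, c i • f i := by
    ext x; simp [Finset.sum_apply]
  simp [this, Finset.sum_apply]

section fwdDiff

variable {R : Type*} [CommRing R]

theorem fwdDiff_iter_succ_id_mul (f : R → R) (m : ℕ) :
    Δ_[1] ^[m + 1] (fun x ↦ x * f x)
      = fun x ↦ x * Δ_[1] ^[m + 1] f x + (m + 1) * Δ_[1] ^[m] f (x + 1) := by
  induction m with
  | zero => ext x; simp [fwdDiff]; ring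
  | succ m ih =>
    ext x
    rw [Function.iterate_succ_apply', ih]
    simp only [Function.iterate_succ_apply', fwdDiff]
    push_cast
    ring

theorem fwdDiff_iter_pow_eval_zero (j m : ℕ) :
    Δ_[1] ^[m] (fun x : R ↦ x ^ j) 0 = m.factorial * j.stirlingSecond m := by
  induction j generalizing m with
  | zero =>
    cases m with
    | zero => simp
    | succ m =>
      simp [Function.iterate_succ_apply, Function.iterate_fixed (fwdDiff_const (1 : R) (0 : R))]
  | succ j ih =>
    cases m with
    | zero => simp
    | succ m =>
      have hshift : Δ_[1] ^[m] (fun x : R ↦ x ^ j) 1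
          = Δ_[1] ^[m] (fun x : R ↦ x ^ j) 0 + Δ_[1] ^[m + 1] (fun x : R ↦ x ^ j) 0 := by
        rw [Function.iterate_succ_apply', fwdDiff, zero_add, add_sub_cancel]
      simp only [pow_succ', fwdDiff_iter_succ_id_mul, zero_mul, zero_add, hshift, ih,
        Nat.stirlingSecond_succ_succ, Nat.factorial_succ]
      push_cast
      ring

theorem fwdDiff_iter_ascPochhammer_eval (n m : ℕ) (y : R) :
    Δ_[1] ^[m] (fun x ↦ (ascPochhammer R n).eval x) y
      = n.descFactorial m * (ascPochhammer R (n - m)).eval (y + m) := by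
  induction m generalizing n y with
  | zero => simp
  | succ m ih =>
    cases n with
    | zero =>
      simp [Function.iterate_succ_apply, Function.iterate_fixed (fwdDiff_const (1 : R) (0 : R))]
    | succ n =>
      have hstep : Δ_[1] (fun x ↦ (ascPochhammer R (n + 1)).eval x)
          = ((n + 1 : ℕ) : R) • fun x ↦ (ascPochhammer R n).eval (x + 1) := by
        ext x
        have hleft : (ascPochhammer R (n + 1)).eval x = x * (ascPochhammer R n).eval (x + 1) := by
          simp [ascPochhammer_succ_left]
        rw [fwdDiff, ascPochhammer_succ_eval n (x + 1), hleft, Pi.smul_apply, smul_eq_mul]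
        push_cast
        ring
      rw [Function.iterate_succ_apply, hstep, fwdDiff_iter_const_smul, Pi.smul_apply,
        fwdDiff_iter_comp_add _ (fun x ↦ (ascPochhammer R n).eval x), ih,
        Nat.succ_descFactorial_succ, Nat.add_sub_add_right]
      push_cast
      ring_nf

theorem fwdDiff_iter_add_pow_eval_zero (i m : ℕ) (y : R) :
    Δ_[1] ^[m] (fun x ↦ (x + y) ^ i) 0
      = m.factorial *
          ∑ j ∈ range (i + 1), (i.choose j * j.stirlingSecond m : R) * y ^ (i - j) := by
  have hexpand : (fun x ↦ (x + y) ^ i)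
      = fun x ↦ ∑ j ∈ range (i + 1), ((i.choose j : R) * y ^ (i - j)) * x ^ j := by
    ext x; rw [add_pow]; exact sum_congr rfl fun j _ ↦ by ring
  rw [hexpand, fwdDiff_iter_sum_mul_apply, mul_sum]
  exact sum_congr rfl fun j _ ↦ by rw [fwdDiff_iter_pow_eval_zero]; ring

theorem factorial_mul_sum_stirlingFirst_mul_sum_choose_mul_stirlingSecond (n m : ℕ) (y : R) :
    m.factorial * ∑ i ∈ range (n + 1), (n.stirlingFirst i : R) *
        ∑ j ∈ range (i + 1), (i.choose j * j.stirlingSecond m : R) * y ^ (i - j)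
      = n.descFactorial m * (ascPochhammer R (n - m)).eval (y + m) := by
  calc _ = ∑ i ∈ range (n + 1),
          (n.stirlingFirst i : R) * Δ_[1] ^[m] (fun x ↦ (x + y) ^ i) 0 := by
        simp only [fwdDiff_iter_add_pow_eval_zero, mul_sum]
        exact sum_congr rfl fun i _ ↦ sum_congr rfl fun j _ ↦ by ring
    _ = Δ_[1] ^[m] (fun x ↦ ∑ i ∈ range (n + 1), (n.stirlingFirst i : R) * (x + y) ^ i) 0 :=
        (fwdDiff_iter_sum_mul_apply _ _ _ (fun i x ↦ (x + y) ^ i) _ _).symm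
    _ = Δ_[1] ^[m] (fun x ↦ (ascPochhammer R n).eval x) y := by
        simp only [← ascPochhammer_eval_eq_sum_stirlingFirst]
        rw [fwdDiff_iter_comp_add _ (fun x ↦ (ascPochhammer R n).eval x), zero_add]
    _ = _ := fwdDiff_iter_ascPochhammer_eval n m y

end fwdDiff

theorem gchoose_eq_descPochhammer_eval {R : Type*} [CommRing R] [Algebra ℚ R] (x : R) (r : ℕ) :
    gchoose x r = algebraMap ℚ R (r.factorial : ℚ)⁻¹ * (descPochhammer R r).eval x := by
  rw [gchoose, descPochhammer_eval_eq_prod_range]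

theorem neg_one_pow_add_mul_pow_sub {R : Type*} [Ring R] {i j : ℕ} (hji : j ≤ i) (l : R) :
    (-1) ^ (i + j) * l ^ (i - j) = (-l) ^ (i - j) := by
  rw [neg_pow l, show i + j = (i - j) + 2 * j by omega, pow_add, pow_mul, neg_one_sq, one_pow,
    mul_one]

theorem sum_Icc_sum_Icc_stirling_eq_sum_range {R : Type*} [CommRing R] (m n : ℕ) (l : R) :
    ∑ i ∈ Icc m n, ∑ j ∈ Icc m i,
        (-1 : R) ^ (i + j) * n.stirlingFirst i * i.choose j * j.stirlingSecond m * l ^ (i - j)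
      = ∑ i ∈ range (n + 1), (n.stirlingFirst i : R) *
          ∑ j ∈ range (i + 1), (i.choose j * j.stirlingSecond m : R) * (-l) ^ (i - j) := by
  have hinner : ∀ i, ∑ j ∈ Icc m i,
      (-1 : R) ^ (i + j) * n.stirlingFirst i * i.choose j * j.stirlingSecond m * l ^ (i - j)
        = n.stirlingFirst i * ∑ j ∈ range (i + 1),
            (i.choose j * j.stirlingSecond m : R) * (-l) ^ (i - j) := by
    intro i
    rw [mul_sum, ← sum_subset (s₁ := Icc m i) (s₂ := range (i + 1))
      (fun j hj ↦ by simp at hj ⊢; omega)]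
    · refine sum_congr rfl fun j hj ↦ ?_
      rw [← neg_one_pow_add_mul_pow_sub (by simp at hj; omega)]
      ring
    · intro j hji hjm
      rw [Nat.stirlingSecond_eq_zero_of_lt (by simp at hji hjm; omega)]
      simp
  rw [← sum_congr rfl fun i _ ↦ hinner i]
  exact sum_subset (fun i hi ↦ by simp at hi ⊢; omega) fun i hin him ↦ by
    rw [Icc_eq_empty (by simp at hin him; omega), sum_empty]

theorem stmt3_general (m n : ℕ) (hmn : m ≤ n) (l : ℚ) :
    ∑ i ∈ Finset.Icc m n, ∑ j ∈ Finset.Icc m i,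
        (-1 : ℚ) ^ (i + j) * stirling1 n i * i.choose j * stirling2 j m * l ^ (i - j) =
      (-1 : ℚ) ^ (m + n) * ((n.factorial : ℚ) / m.factorial) * gchoose (l - m) (n - m) := by
  obtain ⟨k, rfl⟩ := Nat.exists_eq_add_of_le hmn
  have key := factorial_mul_sum_stirlingFirst_mul_sum_choose_mul_stirlingSecond (m + k) m (-l)
  rw [Nat.add_sub_cancel_left, neg_add_eq_sub, ← neg_sub,
    ascPochhammer_eval_neg_eq_descPochhammer] at key
  have hfact := Nat.factorial_mul_descFactorial (Nat.le_add_right m k)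
  rw [Nat.add_sub_cancel_left] at hfact
  rw [stirling1_eq_stirlingFirst, stirling2_eq_stirlingSecond,
    sum_Icc_sum_Icc_stirling_eq_sum_range, Nat.add_sub_cancel_left,
    gchoose_eq_descPochhammer_eval, Algebra.algebraMap_self, RingHom.id_apply, ← hfact]
  push_cast
  field_simp
  rw [mul_comm, key, show m + (m + k) = k + 2 * m by ring, pow_add, pow_mul, neg_one_sq, one_pow,
    mul_one]
  ring

theorem stmt3 (m n : ℕ) (hm : 1 ≤ m) (hmn : m ≤ n) (l : ℚ) :
    ∑ i ∈ Finset.Icc m n, ∑ j ∈ Finset.Icc m i,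
        (-1 : ℚ) ^ (i + j) * stirling1 n i * i.choose j * stirling2 j m * l ^ (i - j) =
      (-1 : ℚ) ^ (m + n) * ((n.factorial : ℚ) / m.factorial) * gchoose (l - m) (n - m) :=
  stmt3_general m n hmn l
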